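/- arXiv:2601.02178 — 5 statements merged into one kernel-verified Lean document; each statement's English description precedes it below -/
import Mathlib

section
/- Let R be a commutative ring, G a group, H a normal subgroup of G, and M an R-module equipped with an R-linear action of G (an R[G]-module); for g ∈ G write ρ_g : M → M for the R-linear map m ↦ g·m and c_g : H → H for the group homomorphism x ↦ g⁻¹xg. Suppose g ∈ G is central in G, and let g₁ be any element of the coset gH (so g₁ is an arbitrary lift of the image of g in G/H). Let T : Hⁱ(H, M) → Hⁱ(H, M) be the endomorphism induced by functoriality of group cohomology from the compatible pair (c_{g₁} : H → H, ρ_{g₁} : M → M) (compatibility: ρ_{g₁}(c_{g₁}(x)·m) = x·ρ_{g₁}(m) for all x ∈ H, m ∈ M). Then for every polynomial p ∈ R[x] such that p(ρ_g) = 0 as an endomorphism of M, one has p(T) = 0 as an endomorphism of Hⁱ(H, M), for every i ≥ 0. -/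
/-!
Write `g₁ = g * h` with `h ∈ H`. Since `g` is central, `ρ g` is an endomorphism of the
`H`-representation `M`, and the cochain map `Φ` factors as postcomposition with `ρ g` followed by
the map induced by the pair `(x ↦ h⁻¹ x h, ρ h)`. The latter comes from an inner automorphism of
`H`, so it is chain homotopic to the identity, through the explicit homotopy
`(s c)(x₁, …, xₙ) = ∑ⱼ (-1)ʲ c(x₁, …, xⱼ, h, h⁻¹ xⱼ₊₁ h, …, h⁻¹ xₙ h)`.
Hence `T` is the image of `ρ g` under the `R`-algebra map `End_H(M) → End(Hⁱ(H, M))` induced by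
functoriality, and `p(T)` is the image of `p(ρ g) = 0`.
-/

open Finset

/- Tuples `Fin N → G` are handled as sequences `ℕ → G` (padded by `1`, truncated back with
`trunc`), so that the simplicial identities below are identities of sequences and need no
`Fin` arithmetic. -/
namespace NatTuple

variable {G : Type*} [Group G]

def padOne {N : ℕ} (x : Fin N → G) : ℕ → G := fun i => if hi : i < N then x ⟨i, hi⟩ else 1

def trunc (N : ℕ) (y : ℕ → G) : Fin N → G := fun k => y k

def mergeAt (l : ℕ) (y : ℕ → G) : ℕ → G := fun i =>
  if i < l then y i else if i = l then y i * y (i + 1) else y (i + 1)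

def insertConj (h : G) (j : ℕ) (y : ℕ → G) : ℕ → G := fun i =>
  if i < j then y i else if i = j then h else h⁻¹ * y (i - 1) * h

variable {N i l j : ℕ} (y : ℕ → G) (h : G)

lemma padOne_of_lt (x : Fin N → G) (hi : i < N) : padOne x i = x ⟨i, hi⟩ := dif_pos hi

lemma trunc_padOne (x : Fin N → G) : trunc N (padOne x) = x :=
  funext fun k => padOne_of_lt x k.isLt

lemma mergeAt_of_lt (hi : i < l) : mergeAt l y i = y i := if_pos hi

lemma mergeAt_self : mergeAt l y l = y l * y (l + 1) := by simp [mergeAt]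

lemma mergeAt_of_gt (hi : l < i) : mergeAt l y i = y (i + 1) := by
  simp [mergeAt, hi.not_gt, hi.ne']

lemma insertConj_of_lt (hi : i < j) : insertConj h j y i = y i := if_pos hi

lemma insertConj_self : insertConj h j y j = h := by simp [insertConj]

lemma insertConj_succ_zero : insertConj h (j + 1) y 0 = y 0 := insertConj_of_lt _ _ j.succ_pos

lemma insertConj_zero_succ : (fun i => insertConj h 0 y (i + 1)) = fun i => h⁻¹ * y i * h := by
  funext i
  simp [insertConj]

lemma insertConj_succ_succ :
    (fun i => insertConj h (j + 1) y (i + 1)) = insertConj h j (fun i => y (i + 1)) := by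
  funext i
  cases i <;> simp only [insertConj, Nat.add_sub_cancel] <;> split_ifs <;> first | rfl | omega

lemma mergeAt_insertConj_succ_of_lt (hlj : l < j) :
    mergeAt l (insertConj h (j + 1) y) = insertConj h j (mergeAt l y) := by
  funext i
  cases i <;> simp only [mergeAt, insertConj, Nat.add_sub_cancel] <;> split_ifs <;>
    first | rfl | omega

lemma mergeAt_succ_insertConj_of_le {t : ℕ} (hjt : j ≤ t) :
    mergeAt (t + 1) (insertConj h j y) = insertConj h j (mergeAt t y) := by
  funext i
  cases i <;> simp only [mergeAt, insertConj, Nat.add_sub_cancel] <;> split_ifs <;>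
    first | rfl | omega | group

lemma mergeAt_insertConj_self :
    mergeAt j (insertConj h j y) = mergeAt j (insertConj h (j + 1) y) := by
  funext i
  cases i <;> simp only [mergeAt, insertConj, Nat.add_sub_cancel] <;> split_ifs <;>
    first | rfl | omega | group

lemma trunc_mergeAt_insertConj_self :
    trunc N (mergeAt N (insertConj h N y)) = trunc N y :=
  funext fun k => (mergeAt_of_lt _ k.isLt).trans (insertConj_of_lt _ _ k.isLt)

lemma contractNth_trunc (n : ℕ) (j : Fin (n + 1)) :
    Fin.contractNth j (· * ·) (trunc (n + 1) y) = trunc n (mergeAt j y) := by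
  funext k
  rcases lt_trichotomy (k : ℕ) j with hk | hk | hk
  · rw [Fin.contractNth_apply_of_lt _ _ _ _ hk]
    exact (mergeAt_of_lt y hk).symm
  · rw [Fin.contractNth_apply_of_eq _ _ _ _ hk]
    exact hk ▸ (mergeAt_self y).symm
  · rw [Fin.contractNth_apply_of_gt _ _ _ _ hk]
    exact (mergeAt_of_gt y hk).symm

lemma trunc_insertConj_congr {y' : ℕ → G} (hj : j ≤ N) (hy : ∀ i < N, y i = y' i) :
    trunc (N + 1) (insertConj h j y) = trunc (N + 1) (insertConj h j y') := by
  funext k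
  simp only [trunc, insertConj]
  split_ifs <;> first | rfl | (rw [hy]; omega)

end NatTuple

/- `f j l` and `g u t` stand for the composites `∂ₗ sⱼ` and `sᵤ ∂ₜ` of face and degeneracy-type
operators; the hypotheses are the corresponding simplicial identities. -/
theorem sum_range_sum_range_neg_one_pow_smul_of_simplicial {R M : Type*} [CommRing R]
    [AddCommGroup M] [Module R M] (f g : ℕ → ℕ → M)
    (h_lt : ∀ j l, l < j → f (j + 1) l = g j l) (h_ge : ∀ j t, j ≤ t → f j (t + 1) = g j t)
    (h_diag : ∀ j, f j j = f (j + 1) j) (N : ℕ) :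
    ∑ j ∈ range (N + 2), ∑ l ∈ range (N + 2), (-1 : R) ^ (j + l + 1) • f j l =
      -f (N + 1) (N + 1) + ∑ u ∈ range (N + 1), ∑ t ∈ range (N + 1), (-1 : R) ^ (u + t) • g u t := by
  induction N with
  | zero =>
    simp only [sum_range_succ, sum_range_zero, zero_add, ← h_diag 0, h_ge 0 0 le_rfl]
    module
  | succ N ih =>
    have row : ∑ l ∈ range (N + 2), (-1 : R) ^ (N + 2 + l + 1) • f (N + 2) l =
        ∑ t ∈ range (N + 1), (-1 : R) ^ (N + 1 + t) • g (N + 1) t + f (N + 2) (N + 1) := by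
      rw [sum_range_succ, show N + 2 + (N + 1) + 1 = 2 * (N + 2) by ring, pow_mul, neg_one_sq,
        one_pow, one_smul]
      congr 1
      refine sum_congr rfl fun l hl => ?_
      rw [h_lt _ _ (mem_range.mp hl)]
      congr 1
      ring
    have col : ∑ j ∈ range (N + 2), (-1 : R) ^ (j + (N + 2) + 1) • f j (N + 2) =
        ∑ u ∈ range (N + 1 + 1), (-1 : R) ^ (u + (N + 1)) • g u (N + 1) := by
      refine sum_congr rfl fun j hj => ?_
      rw [h_ge _ _ (Nat.lt_succ_iff.mp (mem_range.mp hj))]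
      congr 1
      ring
    have sign_even : (-1 : R) ^ (N + 1 + (N + 1)) = 1 := by simp [← two_mul, pow_mul]
    have sign_odd : (-1 : R) ^ (N + 2 + (N + 2) + 1) = -1 := by
      simp [← two_mul, pow_succ, pow_mul]
    rw [sum_range_succ _ (N + 2)]
    simp only [sum_range_succ _ (N + 2), sum_add_distrib, ih, row, col]
    simp only [sum_range_succ _ (N + 1), sum_add_distrib, h_diag (N + 1), sign_even, sign_odd]
    module

namespace Representation.IntertwiningMap

variable {k G V : Type*} [CommSemiring k] [Monoid G] [AddCommMonoid V] [Module k V]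
  (ρ : Representation k G V)

def toEndAlgHom : IntertwiningMap ρ ρ →ₐ[k] Module.End k V where
  toFun f := f.toLinearMap
  map_one' := rfl
  map_mul' _ _ := rfl
  map_zero' := rfl
  map_add' _ _ := rfl
  commutes' _ := rfl

end Representation.IntertwiningMap

open CategoryTheory

lemma HomologicalComplex.homologyMap_smul {R C ι : Type*} [Semiring R] [Category C]
    [Preadditive C] [Linear R C] {c : ComplexShape ι} {K L : HomologicalComplex C c} (φ : K ⟶ L)
    (i : ι) [K.HasHomology i] [L.HasHomology i] (a : R) :
    homologyMap (a • φ) i = a • homologyMap φ i := by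
  change ShortComplex.homologyMap ((shortComplexFunctor C c i).map (a • φ)) = _
  rw [show (shortComplexFunctor C c i).map (a • φ) = a • (shortComplexFunctor C c i).map φ by
    ext <;> rfl]
  exact ShortComplex.homologyMap_smul ..

universe u

namespace groupCohomology

open NatTuple

section ConjHomotopy

variable {k G : Type u} [CommRing k] [Group G] (A : Rep k G) (h : G)

lemma d_apply_trunc (n : ℕ) (c : (Fin n → G) → A) (y : ℕ → G) :
    inhomogeneousCochains.d A n c (trunc (n + 1) y) =
      A.ρ (y 0) (c (trunc n fun i => y (i + 1))) +
        ∑ l ∈ range (n + 1), (-1 : k) ^ (l + 1) • c (trunc n (mergeAt l y)) := by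
  rw [inhomogeneousCochains.d_hom_apply,
    ← Fin.sum_univ_eq_sum_range (fun l => (-1 : k) ^ (l + 1) • c (trunc n (mergeAt l y)))]
  simp only [contractNth_trunc]
  rfl

noncomputable def conjHomotopyMap (n : ℕ) : ((Fin (n + 1) → G) → A) →ₗ[k] ((Fin n → G) → A) :=
  ∑ j ∈ range (n + 1),
    (-1 : k) ^ j • LinearMap.funLeft k A fun x => trunc (n + 1) (insertConj h j (padOne x))

lemma conjHomotopyMap_apply_trunc (n : ℕ) (c : (Fin (n + 1) → G) → A) (y : ℕ → G) :
    conjHomotopyMap A h n c (trunc n y) =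
      ∑ j ∈ range (n + 1), (-1 : k) ^ j • c (trunc (n + 1) (insertConj h j y)) := by
  simp only [conjHomotopyMap, LinearMap.sum_apply, Finset.sum_apply, LinearMap.smul_apply,
    Pi.smul_apply, LinearMap.funLeft_apply]
  refine sum_congr rfl fun j hj => ?_
  rw [trunc_insertConj_congr _ _ (Nat.lt_succ_iff.mp (mem_range.mp hj))
    fun i hi => padOne_of_lt _ hi]

lemma conjHomotopyMap_d_apply_trunc_zero (c : (Fin 0 → G) → A) (y : ℕ → G) :
    conjHomotopyMap A h 0 (inhomogeneousCochains.d A 0 c) (trunc 0 y) =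
      A.ρ h (c (trunc 0 fun i => h⁻¹ * y i * h)) - c (trunc 0 y) := by
  have hc : ∀ z : Fin 0 → G, c z = c (trunc 0 y) := fun z => congrArg c (Subsingleton.elim _ _)
  rw [conjHomotopyMap_apply_trunc, sum_range_one, d_apply_trunc, sum_range_one, insertConj_self,
    hc (trunc 0 fun i => h⁻¹ * y i * h), hc (trunc 0 fun i => insertConj h 0 y (i + 1)),
    hc (trunc 0 (mergeAt 0 _))]
  simp [sub_eq_add_neg]

lemma conjHomotopyMap_d_add_d_conjHomotopyMap_apply_trunc (n : ℕ) (c : (Fin (n + 1) → G) → A)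
    (y : ℕ → G) :
    conjHomotopyMap A h (n + 1) (inhomogeneousCochains.d A (n + 1) c) (trunc (n + 1) y) +
        inhomogeneousCochains.d A n (conjHomotopyMap A h n c) (trunc (n + 1) y) =
      A.ρ h (c (trunc (n + 1) fun i => h⁻¹ * y i * h)) - c (trunc (n + 1) y) := by
  have head_terms : ∑ j ∈ range (n + 1 + 1), (-1 : k) ^ j •
        A.ρ (insertConj h j y 0) (c (trunc (n + 1) fun i => insertConj h j y (i + 1))) =
      A.ρ h (c (trunc (n + 1) fun i => h⁻¹ * y i * h)) -
        A.ρ (y 0) (∑ j ∈ range (n + 1), (-1 : k) ^ j •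
          c (trunc (n + 1) (insertConj h j fun i => y (i + 1)))) := by
    rw [sum_range_succ', insertConj_self, insertConj_zero_succ, map_sum, sub_eq_neg_add,
      ← sum_neg_distrib]
    simp only [insertConj_succ_zero, insertConj_succ_succ, map_smul, pow_succ, pow_zero, one_smul,
      mul_neg_one, neg_smul]
  have faces : ∑ j ∈ range (n + 1 + 1), (-1 : k) ^ j • ∑ l ∈ range (n + 1 + 1),
        (-1 : k) ^ (l + 1) • c (trunc (n + 1) (mergeAt l (insertConj h j y))) =
      -c (trunc (n + 1) y) + ∑ u ∈ range (n + 1), ∑ t ∈ range (n + 1),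
        (-1 : k) ^ (u + t) • c (trunc (n + 1) (insertConj h u (mergeAt t y))) := by
    rw [← trunc_mergeAt_insertConj_self y h, ← sum_range_sum_range_neg_one_pow_smul_of_simplicial
      (fun j l => c (trunc (n + 1) (mergeAt l (insertConj h j y))))
      (fun u t => c (trunc (n + 1) (insertConj h u (mergeAt t y))))
      (fun j l hlj => by rw [mergeAt_insertConj_succ_of_lt _ _ hlj])
      (fun j t hjt => by rw [mergeAt_succ_insertConj_of_le _ _ hjt])
      (fun j => by rw [mergeAt_insertConj_self]) n]
    simp only [smul_sum, smul_smul, ← pow_add, add_assoc]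
  have degeneracies : ∑ l ∈ range (n + 1), (-1 : k) ^ (l + 1) • ∑ u ∈ range (n + 1),
        (-1 : k) ^ u • c (trunc (n + 1) (insertConj h u (mergeAt l y))) =
      -∑ u ∈ range (n + 1), ∑ t ∈ range (n + 1),
        (-1 : k) ^ (u + t) • c (trunc (n + 1) (insertConj h u (mergeAt t y))) := by
    simp only [smul_sum, smul_smul, ← sum_neg_distrib, ← neg_smul]
    rw [sum_comm]
    refine sum_congr rfl fun u _ => sum_congr rfl fun t _ => ?_
    rw [pow_succ]
    ring_nf
  rw [conjHomotopyMap_apply_trunc, d_apply_trunc, sum_congr rfl fun j _ => by rw [d_apply_trunc]]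
  simp only [smul_add, sum_add_distrib, head_terms, faces, conjHomotopyMap_apply_trunc,
    degeneracies]
  abel

noncomputable def conjRepHom : Rep.res (MulAut.conj h⁻¹).toMonoidHom A ⟶ A :=
  Rep.ofHom ⟨A.ρ h, fun x => by
    change A.ρ h * A.ρ (h⁻¹ * x * h⁻¹⁻¹) = A.ρ x * A.ρ h
    rw [← map_mul, ← map_mul]
    group⟩

lemma cochainsMap_conjRepHom_f_apply_trunc (n : ℕ) (c : (Fin n → G) → A) (y : ℕ → G) :
    ((cochainsMap (MulAut.conj h⁻¹).toMonoidHom (conjRepHom A h)).f n).hom c (trunc n y) =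
      A.ρ h (c (trunc n fun i => h⁻¹ * y i * h)) := by
  simp [cochainsMap_f_hom, conjRepHom]
  rfl

noncomputable def conjHomotopy : ∀ i j, (ComplexShape.up ℕ).Rel j i →
    ((inhomogeneousCochains A).X i ⟶ (inhomogeneousCochains A).X j)
  | _, j, rfl => ModuleCat.ofHom (conjHomotopyMap A h j)

lemma cochainsMap_conjRepHom_sub_id :
    cochainsMap (MulAut.conj h⁻¹).toMonoidHom (conjRepHom A h) - 𝟙 _ =
      Homotopy.nullHomotopicMap' (conjHomotopy A h) := by
  ext n : 1
  refine ModuleCat.hom_ext (LinearMap.ext fun c => funext fun x => ?_)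
  rw [← trunc_padOne x]
  rcases n with _ | n
  · rw [Homotopy.nullHomotopicMap'_f_of_not_rel_right (k₀ := 1) rfl (fun l => by simp)]
    change ((cochainsMap (MulAut.conj h⁻¹).toMonoidHom (conjRepHom A h)).f 0).hom c _ - c _ =
      conjHomotopyMap A h 0 (inhomogeneousCochains.d A 0 c) _
    rw [cochainsMap_conjRepHom_f_apply_trunc, conjHomotopyMap_d_apply_trunc_zero]
  · rw [Homotopy.nullHomotopicMap'_f (k₀ := n + 1 + 1) (k₂ := n) rfl rfl,
      inhomogeneousCochains.d_def, inhomogeneousCochains.d_def]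
    change ((cochainsMap (MulAut.conj h⁻¹).toMonoidHom (conjRepHom A h)).f (n + 1)).hom c _ - c _ =
      conjHomotopyMap A h (n + 1) (inhomogeneousCochains.d A (n + 1) c) _ +
        inhomogeneousCochains.d A n (conjHomotopyMap A h n c) _
    rw [cochainsMap_conjRepHom_f_apply_trunc, conjHomotopyMap_d_add_d_conjHomotopyMap_apply_trunc]

theorem map_conjRepHom_eq_id (n : ℕ) :
    map (MulAut.conj h⁻¹).toMonoidHom (conjRepHom A h) n = 𝟙 _ := by
  have := (Homotopy.nullHomotopy' (conjHomotopy A h)).homologyMap_eq n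
  rwa [← cochainsMap_conjRepHom_sub_id, HomologicalComplex.homologyMap_sub,
    HomologicalComplex.homologyMap_zero, HomologicalComplex.homologyMap_id, sub_eq_zero] at this

end ConjHomotopy

section Linearity

variable (k G : Type u) [CommRing k] [Group G]

instance (n : ℕ) : (functor k G n).Additive where
  map_add {A B f g} := by
    change HomologicalComplex.homologyMap ((cochainsFunctor k G).map (f + g)) n = _
    rw [Functor.map_add, HomologicalComplex.homologyMap_add]
    rfl

instance (n : ℕ) : (functor k G n).Linear k where
  map_smul {A B} f r := by
    change HomologicalComplex.homologyMap (cochainsMap (MonoidHom.id G) (r • f)) n = _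
    rw [show cochainsMap (MonoidHom.id G) (r • f) = r • cochainsMap (MonoidHom.id G) f by
      ext; rfl, HomologicalComplex.homologyMap_smul]
    rfl

variable {k G} {V : Type u} [AddCommGroup V] [Module k V] (σ : Representation k G V)

noncomputable def mapAlgHom (n : ℕ) :
    σ.IntertwiningMap σ →ₐ[k] Module.End k (groupCohomology (Rep.of σ) n) where
  toFun f := ((functor k G n).map (Rep.ofHom f)).hom
  map_one' := by
    rw [show Rep.ofHom (1 : σ.IntertwiningMap σ) = 𝟙 _ from rfl, CategoryTheory.Functor.map_id]
    rfl
  map_mul' f g := by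
    rw [show Rep.ofHom (f * g) = Rep.ofHom g ≫ Rep.ofHom f from rfl,
      CategoryTheory.Functor.map_comp]
    rfl
  map_zero' := by
    rw [Rep.ofHom_zero, CategoryTheory.Functor.map_zero]
    rfl
  map_add' f g := by
    rw [Rep.ofHom_add, Functor.map_add, ModuleCat.hom_add]
    rfl
  commutes' r := by
    rw [Representation.IntertwiningMap.algebraMap_apply,
      show Rep.ofHom (r • 1 : σ.IntertwiningMap σ) = r • 𝟙 _ from rfl, Functor.map_smul,
      CategoryTheory.Functor.map_id, ModuleCat.hom_smul, ModuleCat.hom_id,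
      Module.algebraMap_end_eq_smul_id]
    rfl

end Linearity

end groupCohomology

open groupCohomology

/-- Let `G` be a group, `H` a normal subgroup, `M` an `R[G]`-module (given by a representation
`ρ : G →* End_R(M)`), and `g` a central element of `G`.  Let `g₁ = g·h` be any element of the
coset `gH`, and let `Φ` be the endomorphism of the complex of inhomogeneous cochains of the
`H`-representation `M` induced by the compatible pair `(c_{g₁}, ρ(g₁))`, i.e.
`(Φ c)(x) = ρ(g₁) (c (g₁⁻¹ · x · g₁))`.  If `p(ρ(g)) = 0` for a polynomial `p ∈ R[X]`, then the
endomorphism `T` of `Hⁱ(H, M)` induced by `Φ` satisfies `p(T) = 0`, for every `i ≥ 0`. -/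
theorem aeval_induced_map_groupCohomology_eq_zero
    (R : Type) [CommRing R] (G : Type) [Group G] (H : Subgroup G) (hH : H.Normal)
    (M : Type) [AddCommGroup M] [Module R M]
    (ρ : Representation R G M)
    (g : G) (hg : g ∈ Subgroup.center G)
    (g₁ : G) (hg₁ : ∃ h ∈ H, g₁ = g * h)
    (Φ : inhomogeneousCochains (Rep.of (ρ.comp H.subtype)) ⟶
         inhomogeneousCochains (Rep.of (ρ.comp H.subtype)))
    (hΦ : ∀ (n : ℕ) (c : (Fin n → H) → M) (x : Fin n → H),
      (Φ.f n) c x = ρ g₁ (c fun j =>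
        (⟨g₁⁻¹ * (x j : G) * g₁, by simpa using hH.conj_mem _ (x j).2 g₁⁻¹⟩ : H)))
    (i : ℕ) (p : Polynomial R)
    (hp : Polynomial.aeval (ρ g) p = 0) :
    Polynomial.aeval
      (A := Module.End R (groupCohomology (Rep.of (ρ.comp H.subtype)) i))
      (HomologicalComplex.homologyMap Φ i).hom p = 0 := by
  obtain ⟨h, hh, rfl⟩ := hg₁
  have hg_comm : ∀ x : G, x * g = g * x := Subgroup.mem_center_iff.mp hg
  let η : H := ⟨h, hh⟩
  let ψ : Representation.IntertwiningMap (ρ.comp H.subtype) (ρ.comp H.subtype) :=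
    (ρ g).intertwiningMap_of_isIntertwiningMap _ _ fun x =>
      (Representation.IntertwiningMap.isIntertwiningMap_of_mem_center ρ g hg).isIntertwining x
  have hΦ_eq : Φ = cochainsMap (MonoidHom.id H) (Rep.ofHom ψ) ≫
      cochainsMap (MulAut.conj η⁻¹).toMonoidHom (conjRepHom (Rep.of (ρ.comp H.subtype)) η) := by
    ext n : 1
    refine ModuleCat.hom_ext (LinearMap.ext fun c => funext fun x => ?_)
    rw [hΦ]
    change ρ (g * h) (c _) = ρ h (ρ g (c fun j => (MulAut.conj η⁻¹) (x j)))
    rw [← hg_comm h, map_mul, Module.End.mul_apply]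
    congr 3
    funext j
    ext
    change (h * g)⁻¹ * x j * (h * g) = h⁻¹ * x j * h⁻¹⁻¹
    calc (h * g)⁻¹ * x j * (h * g) = g⁻¹ * (h⁻¹ * x j * h) * g := by group
      _ = h⁻¹ * x j * h⁻¹⁻¹ := by rw [mul_assoc, hg_comm, inv_mul_cancel_left, inv_inv]
  have hT : HomologicalComplex.homologyMap Φ i = map (MonoidHom.id H) (Rep.ofHom ψ) i := by
    rw [hΦ_eq, HomologicalComplex.homologyMap_comp,
      show HomologicalComplex.homologyMap (cochainsMap _ (conjRepHom _ η)) i = 𝟙 _ from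
        map_conjRepHom_eq_id _ η i, Category.comp_id]
  have hψ : Polynomial.aeval ψ p = 0 := Representation.IntertwiningMap.toLinearMap_injective _ _
    ((Polynomial.aeval_algHom_apply (Representation.IntertwiningMap.toEndAlgHom _) ψ p).symm.trans hp)
  rw [show (HomologicalComplex.homologyMap Φ i).hom = mapAlgHom _ i ψ from
    congrArg ModuleCat.Hom.hom hT, Polynomial.aeval_algHom_apply, hψ, map_zero]
end

section
/- Let K be an algebraically closed field and let V and W be nonzero finite-dimensional K-vector spaces. Let S be a K-linear endomorphism of V and T a K-linear endomorphism of W. Then the set of eigenvalues of the endomorphism S ⊗ T of the tensor product V ⊗_K W is exactly the set { a·b : a is an eigenvalue of S and b is an eigenvalue of T }. -/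
/-!
`S ⊗ T` is the product of the commuting operators `S ⊗ 1` and `1 ⊗ T`. Both preserve the
`μ`-eigenspace of `S ⊗ T`, so over an algebraically closed field they have a common eigenvector `u`
in it, with eigenvalues `a` and `b`; then `μ = a * b`. Since tensoring over a field preserves
injectivity, `S - a` and `T - b` cannot be injective, so `a` and `b` are eigenvalues of `S` and `T`.
Conversely, `v ⊗ w` is an eigenvector for `a * b` whenever `v` and `w` are eigenvectors.
-/

open TensorProduct Module

theorem TensorProduct.tmul_ne_zero {R V W : Type*} [CommRing R] [NoZeroDivisors R]
    [AddCommGroup V] [Module R V] [Projective R V] [AddCommGroup W] [Module R W] [Projective R W]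
    {v : V} {w : W} (hv : v ≠ 0) (hw : w ≠ 0) : v ⊗ₜ[R] w ≠ 0 := by
  obtain ⟨φ, hφ⟩ := Projective.exists_dual_ne_zero R hv
  obtain ⟨ψ, hψ⟩ := Projective.exists_dual_ne_zero R hw
  intro h
  have := congrArg (dualDistrib R V W (φ ⊗ₜ ψ)) h
  rw [dualDistrib_apply, map_zero] at this
  exact mul_ne_zero hφ hψ this

namespace Module.End

variable {R M N : Type*} [CommRing R] [AddCommGroup M] [Module R M] [AddCommGroup N] [Module R N]

theorem HasEigenvalue.tensorProduct_map [NoZeroDivisors R] [Projective R M] [Projective R N]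
    {f : End R M} {g : End R N} {a b : R} (ha : f.HasEigenvalue a) (hb : g.HasEigenvalue b) :
    HasEigenvalue (map f g) (a * b) := by
  obtain ⟨v, hv, hv0⟩ := ha.exists_hasEigenvector
  obtain ⟨w, hw, hw0⟩ := hb.exists_hasEigenvector
  refine hasEigenvalue_of_hasEigenvector ⟨?_, tmul_ne_zero hv0 hw0⟩
  rw [mem_eigenspace_iff] at hv hw ⊢
  rw [map_tmul, hv, hw, smul_tmul_smul]

theorem eigenspace_rTensor (f : End R M) (a : R) :
    eigenspace (f.rTensor N) a = LinearMap.ker ((f - a • 1).rTensor N) := by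
  rw [eigenspace_def, LinearMap.rTensor_sub, LinearMap.rTensor_smul, one_eq_id (M := M),
    LinearMap.rTensor_id]
  rfl

theorem eigenspace_lTensor (f : End R N) (a : R) :
    eigenspace (f.lTensor M) a = LinearMap.ker ((f - a • 1).lTensor M) := by
  rw [eigenspace_def, LinearMap.lTensor_sub, LinearMap.lTensor_smul, one_eq_id (M := N),
    LinearMap.lTensor_id]
  rfl

theorem HasEigenvalue.of_rTensor [Flat R N] {f : End R M} {a : R}
    (h : HasEigenvalue (f.rTensor N) a) : f.HasEigenvalue a := by
  rw [hasEigenvalue_iff] at h ⊢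
  contrapose! h
  rw [eigenspace_def, LinearMap.ker_eq_bot] at h
  rw [eigenspace_rTensor, LinearMap.ker_eq_bot]
  exact Flat.rTensor_preserves_injective_linearMap _ h

theorem HasEigenvalue.of_lTensor [Flat R M] {f : End R N} {a : R}
    (h : HasEigenvalue (f.lTensor M) a) : f.HasEigenvalue a := by
  rw [hasEigenvalue_iff] at h ⊢
  contrapose! h
  rw [eigenspace_def, LinearMap.ker_eq_bot] at h
  rw [eigenspace_lTensor, LinearMap.ker_eq_bot]
  exact Flat.lTensor_preserves_injective_linearMap _ h

theorem exists_inf_eigenspace_ne_bot {K V : Type*} [Field K] [IsAlgClosed K] [AddCommGroup V]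
    [Module K V] [FiniteDimensional K V] {f : End K V} {p : Submodule K V} (hp : p ≠ ⊥)
    (hf : Set.MapsTo f p p) : ∃ a, p ⊓ f.eigenspace a ≠ ⊥ := by
  have : Nontrivial p := Submodule.nontrivial_iff_ne_bot.mpr hp
  obtain ⟨a, ha⟩ := exists_eigenvalue (f.restrict hf)
  refine ⟨a, ?_⟩
  rw [p.inf_genEigenspace f hf, Ne, ← Submodule.map_bot p.subtype]
  exact (Submodule.map_injective_of_injective p.injective_subtype).ne (hasEigenvalue_iff.mp ha)

end Module.End

open Module.End

theorem eigenvalues_tensorProduct_general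
    (K : Type*) [Field K] [IsAlgClosed K]
    (V W : Type*) [AddCommGroup V] [Module K V] [AddCommGroup W] [Module K W]
    [FiniteDimensional K V] [FiniteDimensional K W]
    (S : Module.End K V) (T : Module.End K W) :
    {μ : K | Module.End.HasEigenvalue
        (M := TensorProduct K V W) (TensorProduct.map S T) μ} =
      {μ : K | ∃ a b : K, S.HasEigenvalue a ∧ T.HasEigenvalue b ∧ μ = a * b} := by
  ext μ
  refine ⟨fun hμ ↦ ?_, fun ⟨a, b, ha, hb, hμ⟩ ↦ hμ ▸ ha.tensorProduct_map hb⟩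
  set A := S.rTensor W
  set B := T.lTensor V
  have hAB : map S T = A * B := (LinearMap.rTensor_comp_lTensor _ S T).symm
  have hcomm : Commute A B := by
    rw [Commute, SemiconjBy, ← hAB]
    exact (LinearMap.lTensor_comp_rTensor _ S T).symm
  rw [Set.mem_ofPred_eq, hAB, hasEigenvalue_iff] at hμ
  obtain ⟨a, ha⟩ := exists_inf_eigenspace_ne_bot hμ
    (mapsTo_genEigenspace_of_comm ((Commute.refl A).mul_left hcomm.symm) μ 1)
  obtain ⟨b, hb⟩ := exists_inf_eigenspace_ne_bot ha fun x hx ↦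
    ⟨mapsTo_genEigenspace_of_comm (hcomm.mul_left (Commute.refl B)) μ 1 hx.1,
      mapsTo_genEigenspace_of_comm hcomm a 1 hx.2⟩
  obtain ⟨u, hu_mem, hu⟩ := Submodule.exists_mem_ne_zero_of_ne_bot hb
  simp only [Submodule.mem_inf] at hu_mem
  obtain ⟨⟨huμ, hua⟩, hub⟩ := hu_mem
  refine ⟨a, b, (hasEigenvalue_of_hasEigenvector ⟨hua, hu⟩).of_rTensor,
    (hasEigenvalue_of_hasEigenvector ⟨hub, hu⟩).of_lTensor, ?_⟩
  rw [mem_eigenspace_iff] at huμ hua hub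
  apply smul_left_injective K hu
  calc μ • u = A (B u) := huμ.symm
    _ = (a * b) • u := by rw [hub, map_smul, hua, smul_smul, mul_comm]

/-- Over an algebraically closed field `K`, the eigenvalues of `S ⊗ T` on `V ⊗ W`
(for nonzero finite-dimensional `V`, `W`) are exactly the products of an eigenvalue of `S`
with an eigenvalue of `T`. -/
theorem eigenvalues_tensorProduct
    (K : Type*) [Field K] [IsAlgClosed K]
    (V W : Type*) [AddCommGroup V] [Module K V] [AddCommGroup W] [Module K W]
    [FiniteDimensional K V] [FiniteDimensional K W] [Nontrivial V] [Nontrivial W]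
    (S : Module.End K V) (T : Module.End K W) :
    {μ : K | Module.End.HasEigenvalue
        (M := TensorProduct K V W) (TensorProduct.map S T) μ} =
      {μ : K | ∃ a b : K, S.HasEigenvalue a ∧ T.HasEigenvalue b ∧ μ = a * b} :=
  eigenvalues_tensorProduct_general K V W S T
end

section
/- Let K be an algebraically closed field, V and W nonzero finite-dimensional K-vector spaces, S an invertible K-linear endomorphism of V, and T a K-linear endomorphism of W. Define Φ : Hom_K(V, W) → Hom_K(V, W) by Φ(f) = T ∘ f ∘ S⁻¹. Then the set of eigenvalues of Φ is exactly the set { b·a⁻¹ : a is an eigenvalue of S and b is an eigenvalue of T }. -/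
/-! An eigenvector `f` of `Φ` with eigenvalue `μ` satisfies `T ∘ f = μ • (f ∘ S)`. For `μ ≠ 0` the
kernel of `f` is `S`-invariant, and an eigenvector `[v]` of the map induced by `S` on `V ⧸ ker f`,
say with eigenvalue `a`, yields the eigenvector `f v` of `T` with eigenvalue `μ a`; that `a` is
also an eigenvalue of `S` is seen on the dual side, where eigenvalues are detected by linear forms
`φ ≠ 0` with `φ ∘ S = a • φ`. Conversely, such a `φ` and an eigenvector `w` of `T` with eigenvalue
`b` give the eigenvector `φ(·) • w` of `Φ` with eigenvalue `b a⁻¹`. -/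

namespace Module.End

variable {K V W : Type*} [Field K] [AddCommGroup V] [Module K V] [AddCommGroup W] [Module K W]

theorem hasEigenvalue_iff_exists_dual [FiniteDimensional K V] {S : End K V} {a : K} :
    S.HasEigenvalue a ↔ ∃ φ : Module.Dual K V, φ ≠ 0 ∧ φ ∘ₗ S = a • φ := by
  rw [hasEigenvalue_iff_mem_spectrum, spectrum.mem_iff, LinearMap.isUnit_iff_range_eq_top,
    LinearMap.range_eq_top, ← LinearMap.dualMap_injective_iff, injective_iff_map_eq_zero]
  push Not
  refine exists_congr fun φ => and_comm.trans (and_congr_right fun _ => ?_)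
  rw [LinearMap.dualMap_apply', LinearMap.comp_sub, sub_eq_zero, eq_comm,
    Algebra.algebraMap_eq_smul_one, LinearMap.comp_smul, one_eq_id, LinearMap.comp_id]

theorem HasEigenvalue.of_mapQ [FiniteDimensional K V] {S : End K V} {p : Submodule K V}
    (hp : p ≤ p.comap S) {a : K} (h : HasEigenvalue (p.mapQ p S hp) a) : S.HasEigenvalue a := by
  obtain ⟨φ, hφ0, hφ⟩ := hasEigenvalue_iff_exists_dual.mp h
  refine hasEigenvalue_iff_exists_dual.mpr ⟨φ ∘ₗ p.mkQ, ?_, ?_⟩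
  · exact fun h0 => hφ0 ((LinearMap.cancel_right p.mkQ_surjective).mp (by simpa using h0))
  · rw [LinearMap.comp_assoc, ← p.mapQ_mkQ p S (h := hp), ← LinearMap.comp_assoc, hφ,
      LinearMap.smul_comp]

theorem HasEigenvalue.smul {T : End K W} {b : K} (h : T.HasEigenvalue b) (c : K) :
    (c • T).HasEigenvalue (c * b) := by
  obtain ⟨w, hw⟩ := h.exists_hasEigenvector
  refine hasEigenvalue_of_hasEigenvector ⟨?_, hw.2⟩
  rw [mem_eigenspace_iff, LinearMap.smul_apply, hw.apply_eq_smul, smul_smul]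

theorem _root_.LinearEquiv.ne_zero_of_hasEigenvalue (S : V ≃ₗ[K] V) {a : K}
    (h : HasEigenvalue (S : End K V) a) : a ≠ 0 := by
  rintro rfl
  obtain ⟨v, hv⟩ := h.exists_hasEigenvector
  exact hv.2 (S.map_eq_zero_iff.mp (by simpa using hv.apply_eq_smul))

theorem _root_.LinearMap.comp_symm_eq_inv_smul {S : V ≃ₗ[K] V} {g : V →ₗ[K] W} {a : K}
    (ha : a ≠ 0) (h : g ∘ₗ S = a • g) : g ∘ₗ S.symm = a⁻¹ • g := by
  ext v
  simpa [smul_smul, inv_mul_cancel₀ ha] using congr(a⁻¹ • $h (S.symm v)).symm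

theorem exists_hasEigenvalue_of_comp_eq_comp [IsAlgClosed K] [FiniteDimensional K V]
    {S : End K V} {T : End K W} {f : V →ₗ[K] W} (hf : f ≠ 0) (h : f ∘ₗ S = T ∘ₗ f) :
    ∃ a, S.HasEigenvalue a ∧ T.HasEigenvalue a := by
  have hfS : ∀ v, f (S v) = T (f v) := LinearMap.ext_iff.mp h
  have hp : LinearMap.ker f ≤ (LinearMap.ker f).comap S := fun v hv => by
    simp_all [LinearMap.mem_ker]
  have : Nontrivial (V ⧸ LinearMap.ker f) :=
    Submodule.Quotient.nontrivial_iff.mpr (mt LinearMap.ker_eq_top.mp hf)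
  obtain ⟨a, ha⟩ := exists_eigenvalue ((LinearMap.ker f).mapQ _ S hp)
  obtain ⟨x, hx⟩ := ha.exists_hasEigenvector
  obtain ⟨v, rfl⟩ := (LinearMap.ker f).mkQ_surjective x
  have hSv : S v - a • v ∈ LinearMap.ker f := by
    have := hx.apply_eq_smul
    rwa [Submodule.mkQ_apply, Submodule.mapQ_apply, ← Submodule.Quotient.mk_smul,
      Submodule.Quotient.eq] at this
  refine ⟨a, ha.of_mapQ hp, hasEigenvalue_of_hasEigenvector (x := f v) ⟨?_, ?_⟩⟩
  · rw [mem_eigenspace_iff, ← hfS, ← sub_eq_zero, ← map_smul, ← map_sub]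
    exact hSv
  · simpa [Submodule.Quotient.mk_eq_zero] using hx.2

theorem exists_hasEigenvalue_of_comp_eq_smul_comp [IsAlgClosed K] [FiniteDimensional K V]
    {S : End K V} {T : End K W} {f : V →ₗ[K] W} (hf : f ≠ 0) {μ : K}
    (h : T ∘ₗ f = μ • (f ∘ₗ S)) : ∃ a, S.HasEigenvalue a ∧ T.HasEigenvalue (μ * a) := by
  rcases eq_or_ne μ 0 with rfl | hμ
  · obtain ⟨u, hu⟩ : ∃ u, f u ≠ 0 := DFunLike.ne_iff.mp hf
    have : Nontrivial V := nontrivial_of_ne u 0 (by rintro rfl; simp at hu)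
    obtain ⟨a, ha⟩ := exists_eigenvalue S
    refine ⟨a, ha, hasEigenvalue_of_hasEigenvector (x := f u) ⟨?_, hu⟩⟩
    rw [mem_eigenspace_iff, ← LinearMap.comp_apply, h]
    simp
  · have h' : f ∘ₗ S = (μ⁻¹ • T) ∘ₗ f := by
      rw [LinearMap.smul_comp, h, smul_smul, inv_mul_cancel₀ hμ, one_smul]
    obtain ⟨a, ha, hb⟩ := exists_hasEigenvalue_of_comp_eq_comp hf h'
    refine ⟨a, ha, ?_⟩
    simpa [smul_smul, mul_inv_cancel₀ hμ] using hb.smul μ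

theorem exists_ne_zero_comp_eq_smul_of_hasEigenvalue [FiniteDimensional K V] {S : End K V}
    {T : End K W} {a b : K} (ha : S.HasEigenvalue a) (hb : T.HasEigenvalue b) :
    ∃ f : V →ₗ[K] W, f ≠ 0 ∧ f ∘ₗ S = a • f ∧ T ∘ₗ f = b • f := by
  obtain ⟨φ, hφ0, hφ⟩ := hasEigenvalue_iff_exists_dual.mp ha
  obtain ⟨w, hw⟩ := hb.exists_hasEigenvector
  refine ⟨φ.smulRight w, ?_, ?_, ?_⟩
  · obtain ⟨u, hu⟩ : ∃ u, φ u ≠ 0 := DFunLike.ne_iff.mp hφ0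
    exact fun h0 => smul_ne_zero hu hw.2 (LinearMap.congr_fun h0 u)
  · ext v
    simp [← LinearMap.comp_apply φ S, hφ, smul_smul]
  · ext v
    simp [hw.apply_eq_smul, smul_comm b]

end Module.End

theorem eigenvalues_conjugation_hom_general
    (K : Type*) [Field K] [IsAlgClosed K]
    (V W : Type*) [AddCommGroup V] [Module K V] [AddCommGroup W] [Module K W]
    [FiniteDimensional K V]
    (S : V ≃ₗ[K] V) (T : Module.End K W)
    (Φ : Module.End K (V →ₗ[K] W))
    (hΦ : ∀ f : V →ₗ[K] W, Φ f = T ∘ₗ f ∘ₗ (S.symm : V →ₗ[K] V)) :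
    {μ : K | Φ.HasEigenvalue μ} =
      {μ : K | ∃ a b : K,
        Module.End.HasEigenvalue (S : V →ₗ[K] V) a ∧ T.HasEigenvalue b ∧ μ = b * a⁻¹} := by
  ext μ
  constructor
  · intro hμ
    obtain ⟨f, hf⟩ := hμ.exists_hasEigenvector
    have hTf : T ∘ₗ f = μ • (f ∘ₗ S) := by
      ext v
      simpa [hΦ] using LinearMap.congr_fun hf.apply_eq_smul (S v)
    obtain ⟨a, ha, hb⟩ := Module.End.exists_hasEigenvalue_of_comp_eq_smul_comp hf.2 hTf
    exact ⟨a, μ * a, ha, hb, by field_simp [S.ne_zero_of_hasEigenvalue ha]⟩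
  · rintro ⟨a, b, ha, hb, rfl⟩
    obtain ⟨f, hf0, hfS, hTf⟩ := Module.End.exists_ne_zero_comp_eq_smul_of_hasEigenvalue ha hb
    refine Module.End.hasEigenvalue_of_hasEigenvector ⟨?_, hf0⟩
    rw [Module.End.mem_eigenspace_iff, hΦ, ← LinearMap.comp_assoc, hTf, LinearMap.smul_comp,
      LinearMap.comp_symm_eq_inv_smul (S.ne_zero_of_hasEigenvalue ha) hfS, smul_smul]

/-- Over an algebraically closed field `K`, if `S` is an invertible endomorphism of a nonzero
finite-dimensional space `V` and `T` an endomorphism of a nonzero finite-dimensional space `W`,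
then the eigenvalues of `Φ : f ↦ T ∘ f ∘ S⁻¹` on `Hom_K(V, W)` are exactly the elements
`b * a⁻¹` with `a` an eigenvalue of `S` and `b` an eigenvalue of `T`. -/
theorem eigenvalues_conjugation_hom
    (K : Type*) [Field K] [IsAlgClosed K]
    (V W : Type*) [AddCommGroup V] [Module K V] [AddCommGroup W] [Module K W]
    [FiniteDimensional K V] [FiniteDimensional K W] [Nontrivial V] [Nontrivial W]
    (S : V ≃ₗ[K] V) (T : Module.End K W)
    (Φ : Module.End K (V →ₗ[K] W))
    (hΦ : ∀ f : V →ₗ[K] W, Φ f = T ∘ₗ f ∘ₗ (S.symm : V →ₗ[K] V)) :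
    {μ : K | Φ.HasEigenvalue μ} =
      {μ : K | ∃ a b : K,
        Module.End.HasEigenvalue (S : V →ₗ[K] V) a ∧ T.HasEigenvalue b ∧ μ = b * a⁻¹} :=
  eigenvalues_conjugation_hom_general K V W S T Φ hΦ
end

section
/- Let K be an algebraically closed field, V a nonzero finite-dimensional K-vector space, and T₁, …, T_m pairwise commuting K-linear endomorphisms of V. Then for all natural numbers k₁, …, k_m, every eigenvalue of the composite T₁^{k₁} ∘ T₂^{k₂} ∘ ⋯ ∘ T_m^{k_m} is of the form a₁^{k₁}·a₂^{k₂}⋯a_m^{k_m}, where each a_i is an eigenvalue of T_i. -/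
/-!
The eigenspace `E` of `T₁^{k₁} ⋯ T_m^{k_m}` for `μ` is invariant under every `T_i`, since the `T_i`
commute with the product. A commuting family acting on a nonzero finite-dimensional space over an
algebraically closed field has a common eigenvector; taking one in `E`, with `T_i v = a_i v`, the
product acts on `v` both as `μ` and as `a₁^{k₁} ⋯ a_m^{k_m}`.
-/

open Module Set

namespace Module.End

variable {K V : Type*} [Field K] [AddCommGroup V] [Module K V]

lemma exists_inf_eigenspace_ne_bot_of_mapsTo [IsAlgClosed K] [FiniteDimensional K V]
    {f : End K V} {p : Submodule K V} (hp : p ≠ ⊥) (hfp : MapsTo f p p) :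
    ∃ μ, p ⊓ f.eigenspace μ ≠ ⊥ := by
  have : Nontrivial p := Submodule.nontrivial_iff_ne_bot.mpr hp
  obtain ⟨μ, hμ⟩ := exists_eigenvalue (f.restrict hfp)
  refine ⟨μ, ?_⟩
  rw [eigenspace, Submodule.inf_genEigenspace f p hfp, ← Submodule.map_bot p.subtype]
  exact (Submodule.map_injective_of_injective p.subtype_injective).ne hμ

/-- Induction on `dim p`: if some `f i` does not act on `p` as a scalar, pass to the proper
nonzero invariant subspace cut out of `p` by an eigenspace of `f i`. -/
theorem exists_common_eigenvector_of_mapsTo [IsAlgClosed K] [FiniteDimensional K V] {ι : Type*}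
    (f : ι → End K V) (hf : Pairwise fun i j => Commute (f i) (f j))
    {p : Submodule K V} (hp : p ≠ ⊥) (hfp : ∀ i, MapsTo (f i) p p) :
    ∃ v ∈ p, v ≠ 0 ∧ ∃ a : ι → K, ∀ i, f i v = a i • v := by
  induction h : finrank K p using Nat.strong_induction_on generalizing p with
  | _ n ih =>
  choose μ hμ using fun i => exists_inf_eigenspace_ne_bot_of_mapsTo hp (hfp i)
  by_cases hscalar : ∀ i, p ≤ (f i).eigenspace (μ i)
  · obtain ⟨v, hvp, hv⟩ := Submodule.exists_mem_ne_zero_of_ne_bot hp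
    exact ⟨v, hvp, hv, μ, fun i => mem_eigenspace_iff.mp (hscalar i hvp)⟩
  push Not at hscalar
  obtain ⟨i, hi⟩ := hscalar
  have hcomm (j : ι) : Commute (f i) (f j) := by
    rcases eq_or_ne i j with rfl | hij
    exacts [Commute.refl _, hf hij]
  have hmaps (j : ι) : MapsTo (f j) (p ⊓ (f i).eigenspace (μ i) : Submodule K V)
      (p ⊓ (f i).eigenspace (μ i) : Submodule K V) :=
    (hfp j).inter_inter (mapsTo_genEigenspace_of_comm (hcomm j) (μ i) 1)
  have hlt : finrank K (p ⊓ (f i).eigenspace (μ i) : Submodule K V) < n :=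
    h ▸ Submodule.finrank_lt_finrank_of_lt (inf_lt_left.mpr hi)
  obtain ⟨v, hv, hv0, a, ha⟩ := ih _ hlt (hμ i) hmaps rfl
  exact ⟨v, hv.1, hv0, a, ha⟩

theorem noncommProd_apply_of_forall_apply_eq_smul {R M ι : Type*} [CommSemiring R]
    [AddCommMonoid M] [Module R M] (s : Finset ι) (f : ι → End R M)
    (hf : (s : Set ι).Pairwise (Function.onFun Commute f)) {v : M} {c : ι → R}
    (h : ∀ i ∈ s, f i v = c i • v) :
    s.noncommProd f hf v = (∏ i ∈ s, c i) • v := by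
  induction s using Finset.cons_induction with
  | empty => simp
  | cons i s hi ih =>
    rw [Finset.noncommProd_cons, Finset.prod_cons, mul_apply,
      ih _ fun j hj => h j (Finset.mem_cons_of_mem hj), map_smul, h i (Finset.mem_cons_self i s),
      smul_smul, mul_comm]

end Module.End

theorem eigenvalue_prod_pow_commuting_general
    (K : Type*) [Field K] [IsAlgClosed K]
    (V : Type*) [AddCommGroup V] [Module K V] [FiniteDimensional K V]
    (m : ℕ) (T : Fin m → Module.End K V)
    (hcomm : ∀ i j, Commute (T i) (T j))
    (k : Fin m → ℕ) (μ : K)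
    (hμ : Module.End.HasEigenvalue
      (Finset.univ.noncommProd (fun i => T i ^ k i)
        (fun i _ j _ _ => (hcomm i j).pow_pow (k i) (k j))) μ) :
    ∃ a : Fin m → K, (∀ i, (T i).HasEigenvalue (a i)) ∧ μ = ∏ i, a i ^ k i := by
  set P := Finset.univ.noncommProd (fun i => T i ^ k i)
    (fun i _ j _ _ => (hcomm i j).pow_pow (k i) (k j))
  have hPcomm (i : Fin m) : Commute P (T i) :=
    (Finset.noncommProd_commute _ _ _ _ fun j _ => (hcomm i j).pow_right (k j)).symm
  obtain ⟨v, hvP, hv, a, ha⟩ :=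
    End.exists_common_eigenvector_of_mapsTo T (fun i j _ => hcomm i j) hμ fun i =>
       End.mapsTo_genEigenspace_of_comm (hPcomm i) μ 1
  have hva (i : Fin m) : (T i).HasEigenvector (a i) v := ⟨End.mem_eigenspace_iff.mpr (ha i), hv⟩
  refine ⟨a, fun i => End.hasEigenvalue_of_hasEigenvector (hva i), smul_left_injective K hv ?_⟩
  calc μ • v = P v := (End.mem_eigenspace_iff.mp hvP).symm
    _ = (∏ i, a i ^ k i) • v :=
      End.noncommProd_apply_of_forall_apply_eq_smul _ _ _ fun i _ => (hva i).pow_apply (k i)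

/-- Over an algebraically closed field, every eigenvalue of a product `T₁^{k₁} ∘ ⋯ ∘ T_m^{k_m}`
of powers of pairwise commuting endomorphisms of a nonzero finite-dimensional vector space is a
corresponding product `a₁^{k₁} ⋯ a_m^{k_m}` of eigenvalues `a_i` of the `T_i`. -/
theorem eigenvalue_prod_pow_commuting
    (K : Type*) [Field K] [IsAlgClosed K]
    (V : Type*) [AddCommGroup V] [Module K V] [FiniteDimensional K V] [Nontrivial V]
    (m : ℕ) (T : Fin m → Module.End K V)
    (hcomm : ∀ i j, Commute (T i) (T j))
    (k : Fin m → ℕ) (μ : K)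
    (hμ : Module.End.HasEigenvalue
      (Finset.univ.noncommProd (fun i => T i ^ k i)
        (fun i _ j _ _ => (hcomm i j).pow_pow (k i) (k j))) μ) :
    ∃ a : Fin m → K, (∀ i, (T i).HasEigenvalue (a i)) ∧ μ = ∏ i, a i ^ k i :=
  eigenvalue_prod_pow_commuting_general K V m T hcomm k μ hμ
end

section
/- Let K be a field, V a K-vector space, T a K-linear endomorphism of V, and d ≥ 1 a natural number. Define the K-linear endomorphism S of the direct sum V^⊕d by S(v₁, v₂, …, v_d) = (T v_d, v₁, …, v_{d−1}). Then for every λ ∈ K: λ is an eigenvalue of S if and only if λ^d is an eigenvalue of T. -/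
/-- Let `T` be an endomorphism of a `K`-vector space `V`, `d ≥ 1`, and let `S` be the
endomorphism of `V^⊕d` given by `S(v₁, …, v_d) = (T v_d, v₁, …, v_{d-1})`.  Then `λ` is an
eigenvalue of `S` iff `λ^d` is an eigenvalue of `T`. -/
theorem eigenvalue_cyclic_shift
    (K : Type*) [Field K] (V : Type*) [AddCommGroup V] [Module K V]
    (T : Module.End K V) (d : ℕ) (hd : 1 ≤ d)
    (S : Module.End K (Fin d → V))
    (hS : ∀ (v : Fin d → V) (i : Fin d),
      S v i = if (i : ℕ) = 0 then T (v ⟨d - 1, by omega⟩)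
              else v ⟨(i : ℕ) - 1, lt_of_le_of_lt (Nat.sub_le _ _) i.isLt⟩)
    (lam : K) :
    S.HasEigenvalue lam ↔ T.HasEigenvalue (lam ^ d) := by
  constructor
  · intro h
    obtain ⟨v, hv1, hv2⟩ := h.exists_hasEigenvector
    rw [Module.End.mem_eigenspace_iff] at hv1
    have heq : ∀ i : Fin d, S v i = lam • v i := by
      intro i; rw [hv1]; rfl
    -- key: v i = lam ^ (d - 1 - i) • v ⟨d-1⟩
    have key : ∀ j : ℕ, ∀ h : j < d, v ⟨d - 1 - j, by omega⟩ = lam ^ j • v ⟨d - 1, by omega⟩ := by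
      intro j
      induction j with
      | zero => intro h; simp
      | succ j ih =>
        intro h
        have hij : d - 1 - j ≠ 0 := by omega
        have := heq ⟨d - 1 - j, by omega⟩
        rw [hS] at this
        simp only [hij, if_neg hij,
          show d - 1 - j - 1 = d - 1 - (j + 1) from by omega, if_false] at this
        rw [this, ih (by omega), smul_smul, ← pow_succ']
    have hlast : v ⟨d - 1, by omega⟩ ≠ 0 := by
      intro h0
      apply hv2
      funext i
      have hi : (i : ℕ) ≤ d - 1 := by omega
      have := key (d - 1 - i) (by omega)
      have hidx : (⟨d - 1 - (d - 1 - (i : ℕ)), by omega⟩ : Fin d) = i := by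
        apply Fin.ext; simp; omega
      rw [hidx, h0, smul_zero] at this
      exact this
    apply Module.End.hasEigenvalue_of_hasEigenvector (x := v ⟨d - 1, by omega⟩)
    refine ⟨Module.End.mem_eigenspace_iff.2 ?_, hlast⟩
    have h0 := heq ⟨0, by omega⟩
    rw [hS] at h0
    simp only [if_pos rfl] at h0
    have hv0 : v (⟨0, by omega⟩ : Fin d) = lam ^ (d - 1) • v ⟨d - 1, by omega⟩ := by
      have := key (d - 1) (by omega)
      simpa using this
    rw [hv0, smul_smul, ← pow_succ'] at h0
    have : d - 1 + 1 = d := by omega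
    rw [this] at h0
    exact h0
  · intro h
    obtain ⟨w, hw1, hw2⟩ := h.exists_hasEigenvector
    rw [Module.End.mem_eigenspace_iff] at hw1
    set v : Fin d → V := fun i => lam ^ (d - 1 - (i : ℕ)) • w with hv
    apply Module.End.hasEigenvalue_of_hasEigenvector (x := v)
    constructor
    · rw [Module.End.mem_eigenspace_iff]
      funext i
      rw [hS]
      by_cases hi : (i : ℕ) = 0
      · rw [if_pos hi]
        have : v ⟨d - 1, by omega⟩ = w := by simp [hv]
        rw [this, hw1]
        simp only [Pi.smul_apply, hv, hi]
        rw [smul_smul, ← pow_succ', show d - 1 - 0 + 1 = d from by omega]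
      · rw [if_neg hi]
        have hlt := i.isLt
        simp only [Pi.smul_apply, hv]
        rw [smul_smul, ← pow_succ',
          show d - 1 - (i : ℕ) + 1 = d - 1 - ((i : ℕ) - 1) from by omega]
    · intro h0
      apply hw2
      have := congrFun h0 ⟨d - 1, by omega⟩
      simpa [hv] using this
end
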